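/- For g ≥ 1, the level 2 principal congruence subgroup Γ_2(g) of GL(g,ℤ) is normally generated in GL(g,ℤ) by F_1 = I_g − 2S_{1,1}, assuming Γ_2(g) is generated by the matrices E_{i,j}² (i ≠ j) and F_i = I_g − 2S_{i,i} (1 ≤ i ≤ g). -/

import Mathlib

open Matrix

/-- The standard symplectic form matrix `J = [[0, I],[-I, 0]]`. -/
def Jmat (g : ℕ) : Matrix (Fin g ⊕ Fin g) (Fin g ⊕ Fin g) ℤ := fromBlocks 0 1 (-1) 0

/-- `Sp(2g, ℤ)` as a set of integer matrices. -/
def SpSet (g : ℕ) : Set (Matrix (Fin g ⊕ Fin g) (Fin g ⊕ Fin g) ℤ) :=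
  {X | IsUnit X.det ∧ Xᵀ * Jmat g * X = Jmat g}

/-- `urSp(2g)`: symplectic matrices with vanishing lower-left `g × g` block. -/
def urSpSet (g : ℕ) : Set (Matrix (Fin g ⊕ Fin g) (Fin g ⊕ Fin g) ℤ) :=
  {X | X ∈ SpSet g ∧ X.toBlocks₂₁ = 0}

/-- The explicit description: matrices `[[A, B],[0, ᵗA⁻¹]]` with `A` unimodular and
`A⁻¹ * B` symmetric. -/
def urSpSet' (g : ℕ) : Set (Matrix (Fin g ⊕ Fin g) (Fin g ⊕ Fin g) ℤ) :=
  {X | ∃ A B : Matrix (Fin g) (Fin g) ℤ, IsUnit A.det ∧ (A⁻¹ * B).IsSymm ∧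
    X = fromBlocks A B 0 (A⁻¹)ᵀ}

/-- `S_{i,j}`: the symmetric matrix with `1` at `(i,j)` and `(j,i)` and `0` elsewhere
(just a `1` at `(i,i)` when `i = j`). -/
def Smat (g : ℕ) (i j : Fin g) : Matrix (Fin g) (Fin g) ℤ :=
  Matrix.of fun k l => if (k = i ∧ l = j) ∨ (k = j ∧ l = i) then 1 else 0

/-- The elementary matrix `E_{i,j} = I + ℰ_{i,j}`. -/
def Emat (g : ℕ) (i j : Fin g) : Matrix (Fin g) (Fin g) ℤ := 1 + Matrix.single i j 1

/-- `F_i = I - 2 S_{i,i}`. -/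
def Fmat (g : ℕ) (i : Fin g) : Matrix (Fin g) (Fin g) ℤ := 1 - 2 • Matrix.single i i 1

/-- `A_{i,j} = I + S_{i,j} - S_{i,i} - S_{j,j}`, the transposition permutation matrix. -/
def Amat (g : ℕ) (i j : Fin g) : Matrix (Fin g) (Fin g) ℤ :=
  1 + Smat g i j - Smat g i i - Smat g j j

/-- `Y_{i,j} = [[I, S_{i,j}],[0, I]]`. -/
def Ymat (g : ℕ) (i j : Fin g) : Matrix (Fin g ⊕ Fin g) (Fin g ⊕ Fin g) ℤ :=
  fromBlocks 1 (Smat g i j) 0 1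

/-- `X_{i,j} = [[E_{i,j}, 0],[0, ᵗE_{i,j}⁻¹]]` (the paper's `-E_{j,i}` denotes `ᵗE_{i,j}⁻¹`). -/
noncomputable def Xmat (g : ℕ) (i j : Fin g) : Matrix (Fin g ⊕ Fin g) (Fin g ⊕ Fin g) ℤ :=
  fromBlocks (Emat g i j) 0 0 ((Emat g i j)⁻¹)ᵀ

/-- `Z_i = [[F_i, 0],[0, F_i]]`. -/
def Zmat (g : ℕ) (i : Fin g) : Matrix (Fin g ⊕ Fin g) (Fin g ⊕ Fin g) ℤ :=
  fromBlocks (Fmat g i) 0 0 (Fmat g i)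

/-- `S_g = {[[I, B],[0, I]] : B symmetric}`. -/
def SgSet (g : ℕ) : Set (Matrix (Fin g ⊕ Fin g) (Fin g ⊕ Fin g) ℤ) :=
  {X | ∃ B : Matrix (Fin g) (Fin g) ℤ, B.IsSymm ∧ X = fromBlocks 1 B 0 1}

/-- `GL(g, ℤ)` as the set of integer matrices with unit determinant. -/
def GLSet (g : ℕ) : Set (Matrix (Fin g) (Fin g) ℤ) := {X | IsUnit X.det}

/-- The level-`d` principal congruence subgroup `Γ_d(g)` of `GL(g, ℤ)`. -/
def GammaSet (d g : ℕ) : Set (Matrix (Fin g) (Fin g) ℤ) :=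
  {X | IsUnit X.det ∧ X.map (fun a : ℤ => (a : ZMod d)) = 1}

/-- The normal closure of `S` in the group `U` (a subset of invertible matrices),
described as the set of products of `U`-conjugates of elements of `S` and their inverses. -/
def ncl {n : Type*} [Fintype n] [DecidableEq n]
    (U S : Set (Matrix n n ℤ)) : Set (Matrix n n ℤ) :=
  ↑(Submonoid.closure {m | ∃ u ∈ U, ∃ y ∈ S, m = u * y * u⁻¹ ∨ m = u * y⁻¹ * u⁻¹})

/-!
Each `F_i` is conjugate to `F_1` by the transposition matrix `A_{1,i}`, and conjugating `F_i`
by `E_{i,j}` flips the sign of the off-diagonal entry, so that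
`E_{i,j}² = (E_{i,j} F_i E_{i,j}⁻¹) F_i` is a product of two conjugates of `F_1`.
Hence every generator of `Γ_2(g)` lies in the normal closure of `F_1`. Conversely, `Γ_2(g)` is
a normal subgroup of `GL(g, ℤ)` containing `F_1`.
-/

section Ncl

variable {n : Type*} [Fintype n] [DecidableEq n] {U S : Set (Matrix n n ℤ)}

theorem conj_mem_ncl {u y : Matrix n n ℤ} (hu : u ∈ U) (hy : y ∈ S) :
    u * y * u⁻¹ ∈ ncl U S :=
  Submonoid.subset_closure ⟨u, hu, y, hy, Or.inl rfl⟩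

theorem ncl_subset {M : Submonoid (Matrix n n ℤ)}
    (hM : ∀ u ∈ U, ∀ y ∈ S, u * y * u⁻¹ ∈ M ∧ u * y⁻¹ * u⁻¹ ∈ M) : ncl U S ⊆ M := by
  refine Submonoid.closure_le.mpr ?_
  rintro m ⟨u, hu, y, hy, rfl | rfl⟩
  exacts [(hM u hu y hy).1, (hM u hu y hy).2]

end Ncl

section Congruence

variable {d g : ℕ} {X : Matrix (Fin g) (Fin g) ℤ}

theorem map_intCast_mul {n : Type*} [Fintype n] (A B : Matrix n n ℤ) :
    (A * B).map (fun a : ℤ => (a : ZMod d)) =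
      A.map (fun a : ℤ => (a : ZMod d)) * B.map (fun a : ℤ => (a : ZMod d)) :=
  Matrix.map_mul (f := Int.castRingHom (ZMod d))

theorem map_intCast_one {n : Type*} [DecidableEq n] :
    (1 : Matrix n n ℤ).map (fun a : ℤ => (a : ZMod d)) = 1 :=
  Matrix.map_one _ Int.cast_zero Int.cast_one

def gammaSubmonoid (d g : ℕ) : Submonoid (Matrix (Fin g) (Fin g) ℤ) where
  carrier := GammaSet d g
  one_mem' := ⟨by simp, map_intCast_one⟩
  mul_mem' ha hb := ⟨by rw [det_mul]; exact ha.1.mul hb.1,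
    by rw [map_intCast_mul, ha.2, hb.2, one_mul]⟩

theorem conj_mem_gammaSet {u : Matrix (Fin g) (Fin g) ℤ} (hu : IsUnit u.det)
    (hX : X ∈ GammaSet d g) : u * X * u⁻¹ ∈ GammaSet d g := by
  refine ⟨by rw [det_conj ((isUnit_iff_isUnit_det u).mpr hu)]; exact hX.1, ?_⟩
  rw [map_intCast_mul, map_intCast_mul, hX.2, mul_one, ← map_intCast_mul,
    mul_nonsing_inv u hu, map_intCast_one]

theorem inv_mem_gammaSet (hX : X ∈ GammaSet d g) : X⁻¹ ∈ GammaSet d g := by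
  refine ⟨isUnit_nonsing_inv_det X hX.1, ?_⟩
  have h := map_intCast_mul (d := d) X X⁻¹
  rwa [mul_nonsing_inv X hX.1, map_intCast_one, hX.2, one_mul, eq_comm] at h

end Congruence

section Generators

variable {g : ℕ} {i j : Fin g}

theorem Fmat_mul_self (i : Fin g) : Fmat g i * Fmat g i = 1 := by
  rw [Fmat, two_smul]
  simp [sub_mul, mul_sub, add_mul, mul_add, -smul_single]
  abel

theorem Fmat_mem_gammaSet (i : Fin g) : Fmat g i ∈ GammaSet 2 g := by
  refine ⟨isUnit_det_of_right_inverse (Fmat_mul_self i), ?_⟩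
  ext k l
  simp [Fmat, one_apply, single, show (2 : ZMod 2) = 0 from rfl]

theorem Amat_eq_of_ne (h : i ≠ j) :
    Amat g i j = 1 + single i j 1 + single j i 1 - single i i 1 - single j j 1 := by
  have hS : ∀ k l : Fin g, Smat g k l = single k l 1 + if k = l then 0 else single l k 1 := by
    intro k l; ext a b; by_cases hkl : k = l <;> simp [Smat, single, hkl] <;> aesop
  simp only [Amat, hS, h, if_true, if_false, add_zero]
  abel

theorem Amat_mul_self (h : i ≠ j) : Amat g i j * Amat g i j = 1 := by
  rw [Amat_eq_of_ne h]
  simp [mul_add, add_mul, mul_sub, sub_mul, h, h.symm, -smul_single]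

theorem Amat_mul_Fmat_mul_Amat (h : i ≠ j) : Amat g i j * Fmat g i * Amat g i j = Fmat g j := by
  rw [Amat_eq_of_ne h, Fmat, Fmat, two_smul, two_smul]
  simp [mul_add, add_mul, mul_sub, sub_mul, h, h.symm, -smul_single]
  abel

theorem Emat_mul_one_sub_single (h : i ≠ j) : Emat g i j * (1 - single i j 1) = 1 := by
  simp [Emat, mul_sub, add_mul, h.symm]

theorem Emat_inv (h : i ≠ j) : (Emat g i j)⁻¹ = 1 - single i j 1 :=
  inv_eq_right_inv (Emat_mul_one_sub_single h)

theorem isUnit_det_Emat (h : i ≠ j) : IsUnit (Emat g i j).det :=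
  isUnit_det_of_right_inverse (Emat_mul_one_sub_single h)

theorem Emat_conj_Fmat_mul_Fmat (h : i ≠ j) :
    Emat g i j * Fmat g i * (Emat g i j)⁻¹ * Fmat g i = Emat g i j ^ 2 := by
  rw [Emat_inv h, Fmat, two_smul]
  simp [Emat, pow_two, mul_add, add_mul, mul_sub, sub_mul, h.symm, -smul_single]
  abel

theorem Fmat_mul_Emat_conj_Fmat (h : i ≠ j) :
    Fmat g i * (Emat g i j * Fmat g i * (Emat g i j)⁻¹) = (Emat g i j ^ 2)⁻¹ := by
  refine (inv_eq_right_inv ?_).symm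
  rw [Emat_inv h, Fmat, two_smul]
  simp [Emat, pow_two, mul_add, add_mul, mul_sub, sub_mul, h.symm, -smul_single]
  abel

theorem conj_Fmat_mem_ncl {u : Matrix (Fin g) (Fin g) ℤ} (hu : IsUnit u.det) (z i : Fin g) :
    u * Fmat g i * u⁻¹ ∈ ncl (GLSet g) {Fmat g z} := by
  rcases eq_or_ne z i with rfl | h
  · exact conj_mem_ncl hu rfl
  · have hA : (Amat g z i)⁻¹ = Amat g z i := inv_eq_right_inv (Amat_mul_self h)
    have hconj : u * Fmat g i * u⁻¹ = u * Amat g z i * Fmat g z * (u * Amat g z i)⁻¹ := by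
      rw [Matrix.mul_inv_rev, hA, ← Amat_mul_Fmat_mul_Amat h]
      simp only [mul_assoc]
    rw [hconj]
    refine conj_mem_ncl ?_ rfl
    rw [GLSet, Set.mem_ofPred_eq, det_mul]
    exact hu.mul (isUnit_det_of_right_inverse (Amat_mul_self h))

theorem Fmat_mem_ncl (z i : Fin g) : Fmat g i ∈ ncl (GLSet g) {Fmat g z} := by
  simpa using conj_Fmat_mem_ncl (u := 1) (by simp) z i

end Generators

/-- If `Γ_2(g)` is generated by the `E_{i,j}²` (`i ≠ j`) and the `F_i`, then `Γ_2(g)`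
is the normal closure of `F_1` in `GL(g, ℤ)`. -/
theorem stmt7 (g : ℕ) (hg : 1 ≤ g)
    (hgen : ∀ X ∈ GammaSet 2 g,
      X ∈ Submonoid.closure
        ({m | ∃ i j : Fin g, i ≠ j ∧ (m = Emat g i j ^ 2 ∨ m = (Emat g i j ^ 2)⁻¹)} ∪
         {m | ∃ i : Fin g, m = Fmat g i})) :
    GammaSet 2 g = ncl (GLSet g) {Fmat g ⟨0, by omega⟩} := by
  refine Set.Subset.antisymm (fun X hX => Submonoid.closure_le.mpr ?_ (hgen X hX)) ?_
  · rintro m (⟨i, j, hij, rfl | rfl⟩ | ⟨i, rfl⟩)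
    · rw [← Emat_conj_Fmat_mul_Fmat hij]
      exact mul_mem (conj_Fmat_mem_ncl (isUnit_det_Emat hij) _ _) (Fmat_mem_ncl _ _)
    · rw [← Fmat_mul_Emat_conj_Fmat hij]
      exact mul_mem (Fmat_mem_ncl _ _) (conj_Fmat_mem_ncl (isUnit_det_Emat hij) _ _)
    · exact Fmat_mem_ncl _ _
  · refine ncl_subset (M := gammaSubmonoid 2 g) ?_
    rintro u hu _ rfl
    have hF := Fmat_mem_gammaSet (g := g) ⟨0, by omega⟩
    exact ⟨conj_mem_gammaSet hu hF, conj_mem_gammaSet hu (inv_mem_gammaSet hF)⟩
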